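/- Let u be a v-minimal word of a synchronizing automaton 𝒜. If x is a word such that θ_i(x) = 0_i for some i ∈ supp(u), then θ_j(x) = 0_j for all j ∈ supp(u). -/

import Mathlib

open scoped BigOperators

set_option synthInstance.maxHeartbeats 1000000
set_option maxHeartbeats 1000000

noncomputable section

/-- Action of a word on a state: `q · u`. -/
def actW {Q A : Type*} (δ : Q → A → Q) (q : Q) (u : List A) : Q :=
  u.foldl δ q

/-- The image `Q · u` of the full state set under a word. -/
def imageSet {Q A : Type*} [Fintype Q] [DecidableEq Q] (δ : Q → A → Q) (u : List A) :
    Finset Q :=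
  Finset.image (fun q => actW δ q u) Finset.univ

/-- The rank `rk(u) = |Q · u|` of a word. -/
def wordRank {Q A : Type*} [Fintype Q] [DecidableEq Q] (δ : Q → A → Q) (u : List A) : ℕ :=
  (imageSet δ u).card

/-- A word is reset (synchronizing) if `|Q · u| = 1`. -/
def IsReset {Q A : Type*} [Fintype Q] [DecidableEq Q] (δ : Q → A → Q) (u : List A) : Prop :=
  wordRank δ u = 1

/-- The automaton is synchronizing if it admits a reset word. -/
def IsSynchronizing {Q A : Type*} [Fintype Q] [DecidableEq Q] (δ : Q → A → Q) : Prop :=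
  ∃ u : List A, IsReset δ u

/-- `Syn(𝒜)`, the set of reset words. -/
def SynWords {Q A : Type*} [Fintype Q] [DecidableEq Q] (δ : Q → A → Q) : Set (List A) :=
  {u | IsReset δ u}

/-- The hyperplane `w⊥ = {v ∈ ℂQ : ∑ q, v q = 0}`. -/
def Wperp (Q : Type*) [Fintype Q] : Submodule ℂ (Q → ℂ) :=
  LinearMap.ker (∑ q : Q, (LinearMap.proj q : (Q → ℂ) →ₗ[ℂ] ℂ))

theorem mem_Wperp {Q : Type*} [Fintype Q] (v : Q → ℂ) :
    v ∈ Wperp Q ↔ ∑ q : Q, v q = 0 := by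
  simp [Wperp, LinearMap.mem_ker, LinearMap.sum_apply]

/-- The (right) action of a word on row vectors `v ↦ v·π(u)`. -/
def piLin {Q A : Type*} [Fintype Q] [DecidableEq Q] (δ : Q → A → Q) (u : List A) :
    (Q → ℂ) →ₗ[ℂ] (Q → ℂ) where
  toFun v := fun p => ∑ q ∈ Finset.univ.filter (fun q => actW δ q u = p), v q
  map_add' := by
    intro a b; funext p; simp [Finset.sum_add_distrib]
  map_smul' := by
    intro c v; funext p; simp [Finset.mul_sum]

theorem piLin_mem {Q A : Type*} [Fintype Q] [DecidableEq Q] (δ : Q → A → Q) (u : List A) :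
    ∀ v ∈ Wperp Q, piLin δ u v ∈ Wperp Q := by
  intro v hv
  rw [mem_Wperp] at hv ⊢
  have h := Finset.sum_fiberwise (Finset.univ : Finset Q) (fun q => actW δ q u) v
  calc ∑ p : Q, piLin δ u v p
      = ∑ p : Q, ∑ q ∈ Finset.univ.filter (fun q => actW δ q u = p), v q := rfl
    _ = ∑ q : Q, v q := h
    _ = 0 := hv

/-- The endomorphism of `w⊥` induced by a word. -/
def rhoEnd {Q A : Type*} [Fintype Q] [DecidableEq Q] (δ : Q → A → Q) (u : List A) :
    Module.End ℂ (Wperp Q) :=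
  (piLin δ u).restrict (piLin_mem δ u)

/-- The representation `ρ : Σ* → End(w⊥)`; we record it in the multiplicative opposite so
that `ρ (u ++ v) = ρ u * ρ v` (the paper's right-action convention). -/
def rho {Q A : Type*} [Fintype Q] [DecidableEq Q] (δ : Q → A → Q) (u : List A) :
    (Module.End ℂ (Wperp Q))ᵐᵒᵖ :=
  MulOpposite.op (rhoEnd δ u)

/-- `ℛ`, the ℂ-subalgebra generated by `ρ(Σ*)`. -/
def Ralg {Q A : Type*} [Fintype Q] [DecidableEq Q] (δ : Q → A → Q) :
    Subalgebra ℂ (Module.End ℂ (Wperp Q))ᵐᵒᵖ :=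
  Algebra.adjoin ℂ (Set.range (rho δ))

/-- `ρ(u)` seen as an element of `ℛ`. -/
def rhoR {Q A : Type*} [Fintype Q] [DecidableEq Q] (δ : Q → A → Q) (u : List A) :
    Ralg δ :=
  ⟨rho δ u, Algebra.subset_adjoin (Set.mem_range_self u)⟩

/-- The Jacobson radical `Rad(ℛ)` of `ℛ`, realised as a subset of the ambient algebra via
the standard characterisation: `x ∈ Rad(ℛ)` iff `x ∈ ℛ` and for every `y ∈ ℛ` the element
`1 - y * x` is left-invertible in `ℛ`. -/
def RadSet {Q A : Type*} [Fintype Q] [DecidableEq Q] (δ : Q → A → Q) :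
    Set (Module.End ℂ (Wperp Q))ᵐᵒᵖ :=
  {x | x ∈ Ralg δ ∧ ∀ y ∈ Ralg δ, ∃ z ∈ Ralg δ, z * (1 - y * x) = 1}

/-- `Rad(𝒜)`: the set of radical words, i.e. words `u` with `ρ(u) ∈ Rad(ℛ)`. -/
def RadWords {Q A : Type*} [Fintype Q] [DecidableEq Q] (δ : Q → A → Q) : Set (List A) :=
  {u | rho δ u ∈ RadSet δ}

/-- The automaton is semisimple when `Rad(𝒜) = Syn(𝒜)`. -/
def IsSemisimple {Q A : Type*} [Fintype Q] [DecidableEq Q] (δ : Q → A → Q) : Prop :=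
  RadWords δ = SynWords δ

/-- The `t`-packing number `D(t,r,n)`: the maximum size of a family of `r`-subsets of an
`n`-set in which every `t`-subset is contained in at most one member. -/
def packingNumber (t r n : ℕ) : ℕ :=
  sSup {m | ∃ F : Finset (Finset (Fin n)), F.card = m ∧ (∀ S ∈ F, S.card = r) ∧
    ∀ T : Finset (Fin n), T.card = t → (F.filter fun S => T ⊆ S).card ≤ 1}

/-- The former-rank `Fr(𝒜)`: the least rank of a non-reset word. -/
def formerRank {Q A : Type*} [Fintype Q] [DecidableEq Q] (δ : Q → A → Q) : ℕ :=
  sInf {m | ∃ u : List A, ¬ IsReset δ u ∧ wordRank δ u = m}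

/-- `Fs(𝒜)`: the set of former-synchronizing words. -/
def Fs {Q A : Type*} [Fintype Q] [DecidableEq Q] (δ : Q → A → Q) : Set (List A) :=
  {u | wordRank δ u = formerRank δ}

/-- `θ_i(u)`: the image of `ρ(u)` in the `i`-th Wedderburn–Artin matrix component, where
`e : ℛ → ∏ i, M_{n_i}(ℂ)` is the quotient map `ψ` followed by the fixed isomorphism. -/
def theta {Q A : Type*} [Fintype Q] [DecidableEq Q] (δ : Q → A → Q) {k : ℕ} {nn : Fin k → ℕ}
    (e : Ralg δ →ₐ[ℂ] ∀ i : Fin k, Matrix (Fin (nn i)) (Fin (nn i)) ℂ)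
    (u : List A) (i : Fin k) : Matrix (Fin (nn i)) (Fin (nn i)) ℂ :=
  e (rhoR δ u) i

/-- `supp(v) = {i : θ_i(v) ≠ 0}`. -/
def suppW {Q A : Type*} [Fintype Q] [DecidableEq Q] (δ : Q → A → Q) {k : ℕ} {nn : Fin k → ℕ}
    (e : Ralg δ →ₐ[ℂ] ∀ i : Fin k, Matrix (Fin (nn i)) (Fin (nn i)) ℂ)
    (v : List A) : Set (Fin k) :=
  {i | theta δ e v i ≠ 0}

/-- `u ∈ Σ* v Σ*`, i.e. `v` is a factor of `u`. -/
def InFactor {A : Type*} (v u : List A) : Prop :=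
  ∃ a b : List A, u = a ++ v ++ b

/-- `u` is a `v`-minimal word: `u ∈ Σ*vΣ*`, `supp(u)` is nonempty, and `supp(u)` is minimal
among the nonempty supports of words in `Σ*vΣ*`. -/
def IsVMinimal {Q A : Type*} [Fintype Q] [DecidableEq Q] (δ : Q → A → Q) {k : ℕ}
    {nn : Fin k → ℕ}
    (e : Ralg δ →ₐ[ℂ] ∀ i : Fin k, Matrix (Fin (nn i)) (Fin (nn i)) ℂ)
    (v u : List A) : Prop :=
  InFactor v u ∧ (suppW δ e u).Nonempty ∧
    ∀ z : List A, InFactor v z → suppW δ e z ⊆ suppW δ e u →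
      suppW δ e z = ∅ ∨ suppW δ e z = suppW δ e u

/-- The `i`-th factor monoid `ℳ_i = θ_i(Σ*)`. -/
def factorMonoid {Q A : Type*} [Fintype Q] [DecidableEq Q] (δ : Q → A → Q) {k : ℕ}
    {nn : Fin k → ℕ}
    (e : Ralg δ →ₐ[ℂ] ∀ i : Fin k, Matrix (Fin (nn i)) (Fin (nn i)) ℂ)
    (i : Fin k) : Set (Matrix (Fin (nn i)) (Fin (nn i)) ℂ) :=
  Set.range fun u : List A => theta δ e u i

/-- A two-sided ideal of the (sub)monoid `M`. -/
def IsSetIdeal {X : Type*} [Mul X] (M I : Set X) : Prop :=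
  I ⊆ M ∧ ∀ a ∈ M, ∀ x ∈ I, a * x ∈ I ∧ x * a ∈ I

/-- `I` is a `0`-minimal (two-sided) ideal of the monoid `M`. -/
def IsZeroMinimalIdeal {X : Type*} [Mul X] [Zero X] (M I : Set X) : Prop :=
  IsSetIdeal M I ∧ (0 : X) ∈ I ∧ I ≠ {0} ∧
    ∀ J : Set X, IsSetIdeal M J → (0 : X) ∈ J → J ⊆ I → J ≠ {0} → J = I

/-- `Rnk_i(g) = min {rk(u) : θ_i(u) = g}`. -/
def rnkElt {Q A : Type*} [Fintype Q] [DecidableEq Q] (δ : Q → A → Q) {k : ℕ}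
    {nn : Fin k → ℕ}
    (e : Ralg δ →ₐ[ℂ] ∀ i : Fin k, Matrix (Fin (nn i)) (Fin (nn i)) ℂ)
    (i : Fin k) (g : Matrix (Fin (nn i)) (Fin (nn i)) ℂ) : ℕ :=
  sInf {m | ∃ u : List A, theta δ e u i = g ∧ wordRank δ u = m}

/-- `Rnk(ℐ_i) = min {Rnk_i(g) : g ∈ ℐ_i ∖ {0}}`. -/
def rnkIdeal {Q A : Type*} [Fintype Q] [DecidableEq Q] (δ : Q → A → Q) {k : ℕ}
    {nn : Fin k → ℕ}
    (e : Ralg δ →ₐ[ℂ] ∀ i : Fin k, Matrix (Fin (nn i)) (Fin (nn i)) ℂ)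
    (i : Fin k) (I : Set (Matrix (Fin (nn i)) (Fin (nn i)) ℂ)) : ℕ :=
  sInf {m | ∃ g ∈ I, g ≠ 0 ∧ rnkElt δ e i g = m}

/-- `w` `u`-represents `g`: `w ∈ Σ*uΣ*`, `θ_i(w) = g`, and either `g = 0` or `rk(w)` is
minimum among all words with the first two properties. -/
def URepresents {Q A : Type*} [Fintype Q] [DecidableEq Q] (δ : Q → A → Q) {k : ℕ}
    {nn : Fin k → ℕ}
    (e : Ralg δ →ₐ[ℂ] ∀ i : Fin k, Matrix (Fin (nn i)) (Fin (nn i)) ℂ)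
    (u : List A) (i : Fin k) (w : List A) (g : Matrix (Fin (nn i)) (Fin (nn i)) ℂ) : Prop :=
  InFactor u w ∧ theta δ e w i = g ∧
    (g = 0 ∨ ∀ w' : List A, InFactor u w' → theta δ e w' i = g → wordRank δ w ≤ wordRank δ w')

/-- The relation `σ_i` on `ℐ_i`. -/
def sigmaRel {Q A : Type*} [Fintype Q] [DecidableEq Q] (δ : Q → A → Q) {k : ℕ}
    {nn : Fin k → ℕ}
    (e : Ralg δ →ₐ[ℂ] ∀ i : Fin k, Matrix (Fin (nn i)) (Fin (nn i)) ℂ)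
    (i : Fin k) (u : List A)
    (g f : Matrix (Fin (nn i)) (Fin (nn i)) ℂ) : Prop :=
  g = f ∨ ∃ w₁ w₂ : List A, URepresents δ e u i w₁ g ∧ URepresents δ e u i w₂ f ∧
    1 < (imageSet δ w₁ ∩ imageSet δ w₂).card

/-- `T ⊆ [1,k]` is a core. -/
def IsCore {Q A : Type*} [Fintype Q] [DecidableEq Q] (δ : Q → A → Q) {k : ℕ}
    {nn : Fin k → ℕ}
    (e : Ralg δ →ₐ[ℂ] ∀ i : Fin k, Matrix (Fin (nn i)) (Fin (nn i)) ℂ)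
    (T : Set (Fin k)) : Prop :=
  ∀ x : List A, (∀ i ∈ T, theta δ e x i = 0) → ∀ i : Fin k, theta δ e x i = 0

/-- A minimal core. -/
def IsMinimalCore {Q A : Type*} [Fintype Q] [DecidableEq Q] (δ : Q → A → Q) {k : ℕ}
    {nn : Fin k → ℕ}
    (e : Ralg δ →ₐ[ℂ] ∀ i : Fin k, Matrix (Fin (nn i)) (Fin (nn i)) ℂ)
    (T : Set (Fin k)) : Prop :=
  IsCore δ e T ∧ ∀ T' : Set (Fin k), T' ⊆ T → IsCore δ e T' → T' = T

/-- An automaton congruence. -/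
def IsCongruence {Q A : Type*} (δ : Q → A → Q) (σ : Q → Q → Prop) : Prop :=
  Equivalence σ ∧ ∀ q p : Q, σ q p → ∀ u : List A, σ (actW δ q u) (actW δ p u)

/-- A simple automaton: the only congruences are the identity and the universal relation. -/
def IsSimple {Q A : Type*} (δ : Q → A → Q) : Prop :=
  ∀ σ : Q → Q → Prop, IsCongruence δ σ → σ = Eq ∨ σ = fun _ _ => True

/-!
For `j ∈ supp(u)` and words `y, y'`, the word `u y x y' u` lies in `Σ*vΣ*`, has support inside
`supp(u)` and misses `i`, so by minimality its support is empty: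
`θ_j(u) θ_j(y) θ_j(x) θ_j(y') θ_j(u) = 0`. Since `e` is onto, `θ_j(Σ*)` spans `M_{n_j}(ℂ)`, so
`θ_j(u) a θ_j(x) b θ_j(u) = 0` for all matrices `a, b`; a full matrix ring is prime and
`θ_j(u) ≠ 0`, hence `θ_j(x) = 0`.
-/

theorem mul_mul_eq_zero_of_span_eq_top {K R : Type*} [CommSemiring K] [Semiring R] [Algebra K R]
    {S : Set R} (hS : Submodule.span K S = ⊤) {a b : R} (h : ∀ s ∈ S, a * s * b = 0)
    (m : R) : a * m * b = 0 := by
  have hf : LinearMap.mulLeft K a ∘ₗ LinearMap.mulRight K b = 0 :=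
    LinearMap.ext_on hS fun s hs => by simpa [mul_assoc] using h s hs
  simpa [mul_assoc] using LinearMap.congr_fun hf m

theorem Matrix.eq_zero_or_eq_zero_of_forall_mul_mul_eq_zero {n R : Type*} [Fintype n]
    [DecidableEq n] [Semiring R] [NoZeroDivisors R] {a b : Matrix n n R}
    (h : ∀ m, a * m * b = 0) : a = 0 ∨ b = 0 := by
  by_contra! hab
  obtain ⟨p, q, hpq⟩ : ∃ p q, a p q ≠ 0 := by
    by_contra! ha; exact hab.1 (Matrix.ext ha)
  obtain ⟨r, s, hrs⟩ : ∃ r s, b r s ≠ 0 := by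
    by_contra! hb; exact hab.2 (Matrix.ext hb)
  have hentry : (a * Matrix.single q r (1 : R) * b) p s = a p q * b r s := by
    rw [Matrix.mul_apply, Finset.sum_eq_single r (fun t _ ht => by
      rw [Matrix.mul_single_apply_of_ne _ _ _ _ _ ht, zero_mul]) (by simp),
      Matrix.mul_single_apply_same, mul_one]
  rw [h, Matrix.zero_apply] at hentry
  exact mul_ne_zero hpq hrs hentry.symm

section WordAction

theorem actW_append {Q A : Type*} (δ : Q → A → Q) (q : Q) (a b : List A) :
    actW δ q (a ++ b) = actW δ (actW δ q a) b :=
  List.foldl_append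

variable {Q A : Type*} [Fintype Q] [DecidableEq Q] (δ : Q → A → Q)

theorem piLin_append (a b : List A) :
    piLin δ (a ++ b) = piLin δ b ∘ₗ piLin δ a := by
  refine LinearMap.ext fun v => funext fun p => ?_
  show ∑ q ∈ Finset.univ.filter (fun q => actW δ q (a ++ b) = p), v q
      = ∑ q' ∈ Finset.univ.filter (fun q' => actW δ q' b = p),
          ∑ q ∈ Finset.univ.filter (fun q => actW δ q a = q'), v q
  rw [Finset.sum_fiberwise_eq_sum_filter]
  simp only [actW_append, Finset.mem_filter, Finset.mem_univ, true_and]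

theorem piLin_nil : piLin δ ([] : List A) = LinearMap.id := by
  refine LinearMap.ext fun v => funext fun p => ?_
  show ∑ q ∈ Finset.univ.filter (fun q => q = p), v q = v p
  rw [Finset.filter_eq', if_pos (Finset.mem_univ p), Finset.sum_singleton]

theorem rho_append (a b : List A) : rho δ (a ++ b) = rho δ a * rho δ b := by
  rw [rho, rho, rho, ← MulOpposite.op_mul]
  congr 1
  ext w : 2
  simp [rhoEnd, piLin_append]

theorem rho_nil : rho δ ([] : List A) = 1 := by
  rw [rho, ← MulOpposite.op_one]
  congr 1
  ext w : 2
  simp [rhoEnd, piLin_nil]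

theorem rhoR_append (a b : List A) : rhoR δ (a ++ b) = rhoR δ a * rhoR δ b :=
  Subtype.ext (rho_append δ a b)

theorem theta_append {k : ℕ} {nn : Fin k → ℕ}
    (e : Ralg δ →ₐ[ℂ] ∀ i : Fin k, Matrix (Fin (nn i)) (Fin (nn i)) ℂ) (a b : List A)
    (i : Fin k) : theta δ e (a ++ b) i = theta δ e a i * theta δ e b i := by
  simp only [theta, rhoR_append, map_mul, Pi.mul_apply]

end WordAction

section Span

variable {Q A : Type*} [Fintype Q] [DecidableEq Q] (δ : Q → A → Q)

theorem closure_range_rho_subset :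
    (Submonoid.closure (Set.range (rho δ)) : Set _) ⊆ Set.range (rho δ) := by
  intro a ha
  induction ha using Submonoid.closure_induction with
  | mem x hx => exact hx
  | one => exact ⟨[], rho_nil δ⟩
  | mul x y _ _ hx hy =>
    obtain ⟨a, rfl⟩ := hx
    obtain ⟨b, rfl⟩ := hy
    exact ⟨a ++ b, rho_append δ a b⟩

theorem span_range_rhoR : Submodule.span ℂ (Set.range (rhoR δ)) = ⊤ := by
  have hR : Subalgebra.toSubmodule (Ralg δ) = Submodule.span ℂ (Set.range (rho δ)) :=
    Algebra.adjoin_eq_span_of_subset _ ((closure_range_rho_subset δ).trans Submodule.subset_span)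
  apply Submodule.map_injective_of_injective (Subalgebra.toSubmodule (Ralg δ)).injective_subtype
  rw [Submodule.map_span, ← Set.range_comp, Submodule.map_subtype_top]
  exact hR.symm

theorem span_range_theta_eq_top {k : ℕ} {nn : Fin k → ℕ}
    {e : Ralg δ →ₐ[ℂ] ∀ i : Fin k, Matrix (Fin (nn i)) (Fin (nn i)) ℂ}
    (he : Function.Surjective e) (i : Fin k) :
    Submodule.span ℂ (Set.range fun u : List A => theta δ e u i) = ⊤ := by
  let L := LinearMap.proj (R := ℂ) i ∘ₗ e.toLinearMap
  have hL : Function.Surjective L := (Function.surjective_eval i).comp he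
  change Submodule.span ℂ (Set.range (L ∘ rhoR δ)) = ⊤
  rw [Set.range_comp, ← Submodule.map_span, span_range_rhoR, Submodule.map_top,
    LinearMap.range_eq_top.mpr hL]

end Span

section Minimal

variable {Q A : Type*} [Fintype Q] [DecidableEq Q] (δ : Q → A → Q) {k : ℕ} {nn : Fin k → ℕ}
  {e : Ralg δ →ₐ[ℂ] ∀ i : Fin k, Matrix (Fin (nn i)) (Fin (nn i)) ℂ}

theorem IsVMinimal.theta_append_eq_zero {v u : List A} (hu : IsVMinimal δ e v u) {i : Fin k}
    (hi : i ∈ suppW δ e u) {w : List A} (hw : theta δ e (u ++ w) i = 0) (j : Fin k) :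
    theta δ e (u ++ w) j = 0 := by
  have hfactor : InFactor v (u ++ w) := by
    obtain ⟨a, b, rfl⟩ := hu.1
    exact ⟨a, b ++ w, by simp⟩
  have hsub : suppW δ e (u ++ w) ⊆ suppW δ e u := fun j hj hu0 =>
    hj (by rw [theta_append, hu0, zero_mul])
  rcases hu.2.2 _ hfactor hsub with hempty | hsame
  · by_contra hj
    exact (hempty ▸ hj : j ∈ (∅ : Set (Fin k)))
  · rw [← hsame] at hi
    exact absurd hw hi

end Minimal

theorem stmt14_general {Q A : Type*} [Fintype Q] [DecidableEq Q] (δ : Q → A → Q)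
    {k : ℕ} {nn : Fin k → ℕ}
    (e : Ralg δ →ₐ[ℂ] ∀ i : Fin k, Matrix (Fin (nn i)) (Fin (nn i)) ℂ)
    (he_surj : Function.Surjective e)
    (v u : List A) (hu : IsVMinimal δ e v u)
    (x : List A) (i : Fin k) (hi : i ∈ suppW δ e u) (hx : theta δ e x i = 0) :
    ∀ j ∈ suppW δ e u, theta δ e x j = 0 := by
  intro j hj
  have hwords : ∀ y y' : List A,
      theta δ e u j * theta δ e y j * theta δ e x j * theta δ e y' j * theta δ e u j = 0 := by
    intro y y'
    have := hu.theta_append_eq_zero δ hi (w := y ++ x ++ y' ++ u)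
      (by simp only [theta_append, hx, mul_zero, zero_mul]) j
    simpa only [theta_append, mul_assoc] using this
  have hspan := span_range_theta_eq_top δ he_surj j
  have hright : ∀ (y : List A) m,
      theta δ e u j * theta δ e y j * theta δ e x j * m * theta δ e u j = 0 := fun y =>
    mul_mul_eq_zero_of_span_eq_top hspan (by rintro _ ⟨y', rfl⟩; exact hwords y y')
  have hleft : ∀ m a, theta δ e u j * a * (theta δ e x j * m * theta δ e u j) = 0 := fun m =>
    mul_mul_eq_zero_of_span_eq_top hspan (by
      rintro _ ⟨y, rfl⟩; simpa only [mul_assoc] using hright y m)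
  have hxu : ∀ m, theta δ e x j * m * theta δ e u j = 0 := fun m =>
    (Matrix.eq_zero_or_eq_zero_of_forall_mul_mul_eq_zero (hleft m)).resolve_left hj
  exact (Matrix.eq_zero_or_eq_zero_of_forall_mul_mul_eq_zero hxu).resolve_right hj

theorem stmt14 {Q A : Type*} [Fintype Q] [DecidableEq Q] (δ : Q → A → Q)
    {k : ℕ} {nn : Fin k → ℕ}
    (e : Ralg δ →ₐ[ℂ] ∀ i : Fin k, Matrix (Fin (nn i)) (Fin (nn i)) ℂ)
    (he_surj : Function.Surjective e)
    (he_ker : ∀ x : Ralg δ, e x = 0 ↔ (x : (Module.End ℂ (Wperp Q))ᵐᵒᵖ) ∈ RadSet δ)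
    (hsync : IsSynchronizing δ)
    (v u : List A) (hu : IsVMinimal δ e v u)
    (x : List A) (i : Fin k) (hi : i ∈ suppW δ e u) (hx : theta δ e x i = 0) :
    ∀ j ∈ suppW δ e u, theta δ e x j = 0 :=
  stmt14_general δ e he_surj v u hu x i hi hx

end
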